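/- For every finite graph G and every maximum matching M of G: every vertex of A(G) is matched by M to a vertex of D(G), and distinct vertices of A(G) are matched by M to vertices lying in distinct connected components of the subgraph induced on D(G). -/

import Mathlib

/-- A maximum matching of `G`: a matching with the greatest possible number of
edges. -/
def IsMaximumMatching {V : Type*} (G : SimpleGraph V) (M : G.Subgraph) : Prop :=
  M.IsMatching ∧ ∀ M' : G.Subgraph, M'.IsMatching → M'.edgeSet.ncard ≤ M.edgeSet.ncard

/-- `D(G)`: the set of vertices left unmatched by some maximum matching of `G`. -/
def Dset {V : Type*} (G : SimpleGraph V) : Set V :=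
  {v | ∃ M : G.Subgraph, IsMaximumMatching G M ∧ v ∉ M.verts}

/-- `A(G)`: the set of vertices not in `D(G)` having a neighbor in `D(G)`. -/
def Aset {V : Type*} (G : SimpleGraph V) : Set V :=
  {v | v ∉ Dset G ∧ ∃ w ∈ Dset G, G.Adj v w}

/-- `C(G) = V(G) \ (D(G) ∪ A(G))`. -/
def Cset {V : Type*} (G : SimpleGraph V) : Set V :=
  (Dset G ∪ Aset G)ᶜ

/-!
Matchings of `G - S` are treated as matchings of `G` that cover no vertex of `S`, and every step
is a switch of matchings along an alternating path.

Stability: if `a` is covered by every maximum matching of `G - S` and has a neighbour in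
`D(G - S)`, then deleting `a` lowers the matching number by one and leaves `D` unchanged away from
`a`. Iterating, `D(G - S) = D(G) \ S` for all `S ⊆ A(G)`. For `S = ∅` this shows that the partner
`b` of `a ∈ A(G)` lies in `D(G)`, since `M - ab` is a maximum matching of `G - a` missing `b`.

Consequently, deleting from `M` the set `A(G)` together with its partners leaves a maximum matching
of `G - A(G)` that misses the partners `d ≠ d'` of `a ≠ a'`. This is impossible if `d` and `d'`
are joined by a path in `D(G)` (Gallai's lemma): switching along an alternating path moves a
missed vertex to any of its neighbours in `D(G - S)`, so walking from `d` towards `d'` yields a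
maximum matching missing two adjacent vertices, which could be augmented.
-/

open Set

namespace SimpleGraph

variable {V : Type*} {G : SimpleGraph V}

namespace Subgraph

variable {M : G.Subgraph} {u v : V}

theorem IsMatching.ncard_verts [Finite V] (hM : M.IsMatching) :
    M.verts.ncard = 2 * M.edgeSet.ncard := by
  classical
  have := Fintype.ofFinite V
  have hdeg : ∀ v, M.spanningCoe.degree v = if v ∈ M.verts then 1 else 0 := by
    intro v
    split_ifs with hv
    · rw [degree_spanningCoe]; exact (isMatching_iff_forall_degree.mp hM) v hv
    · rw [degree_spanningCoe]; exact degree_of_notMem_verts hv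
  have := M.spanningCoe.sum_degrees_eq_twice_card_edges
  simp only [hdeg, Finset.sum_boole, Nat.cast_id] at this
  rw [← Set.ncard_coe_finset, ← Set.ncard_coe_finset, coe_edgeFinset, edgeSet_spanningCoe] at this
  simpa using this

theorem IsMatching.deleteVerts (hM : M.IsMatching) {T : Set V}
    (hT : ∀ ⦃u v⦄, M.Adj u v → u ∈ T → v ∈ T) : (M.deleteVerts T).IsMatching := by
  rintro v ⟨hv, hvT⟩
  obtain ⟨w, hw, huniq⟩ := hM hv
  exact ⟨w, deleteVerts_adj.2 ⟨hv, hvT, M.edge_vert hw.symm, fun hwT => hvT (hT hw.symm hwT), hw⟩,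
    fun w' hw' => huniq w' (deleteVerts_adj.1 hw').2.2.2.2⟩

theorem IsMatching.deleteVerts_pair (hM : M.IsMatching) (huv : M.Adj u v) :
    (M.deleteVerts {u, v}).IsMatching :=
  hM.deleteVerts fun _ _ h hw => by
    rcases hw with rfl | rfl
    · exact .inr (hM.eq_of_adj_left h huv)
    · exact .inl (hM.eq_of_adj_left h huv.symm)

theorem IsMatching.sup_subgraphOfAdj (hM : M.IsMatching) (h : G.Adj u v) (hu : u ∉ M.verts)
    (hv : v ∉ M.verts) : (M ⊔ G.subgraphOfAdj h).IsMatching :=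
  hM.sup (.subgraphOfAdj h) <| by
    rw [hM.support_eq_verts, support_subgraphOfAdj, Set.disjoint_insert_right,
      Set.disjoint_singleton_right]
    exact ⟨hu, hv⟩

end Subgraph

structure IsAltPath (P Q : G.Subgraph) (x : ℕ → V) (n : ℕ) : Prop where
  injOn : InjOn x (Iic n)
  adj : ∀ i < n, (if Even i then P else Q).Adj (x i) (x (i + 1))

namespace IsAltPath

variable {P Q N : G.Subgraph} {x : ℕ → V} {m : ℕ}

theorem ne (hx : IsAltPath P Q x m) {i j : ℕ} (hi : i ≤ m) (hj : j ≤ m) (hij : i ≠ j) :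
    x i ≠ x j :=
  hx.injOn.ne hi hj hij

theorem mono {P' Q' : G.Subgraph} (hx : IsAltPath P Q x m) (hP : P ≤ P') (hQ : Q ≤ Q') :
    IsAltPath P' Q' x m := by
  refine ⟨hx.injOn, fun i hi => ?_⟩
  have := hx.adj i hi
  split_ifs at this ⊢
  exacts [hP.2 this, hQ.2 this]

theorem take (hx : IsAltPath P Q x m) {n : ℕ} (hn : n ≤ m) : IsAltPath P Q x n :=
  ⟨hx.injOn.mono (Iic_subset_Iic.2 hn), fun i hi => hx.adj i (by omega)⟩

theorem reverse_of_even (hx : IsAltPath P Q x m) (hm : Even m) :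
    IsAltPath Q P (fun i => x (m - i)) m := by
  refine ⟨fun i hi j hj h => ?_, fun i hi => ?_⟩
  · have := hx.injOn (mem_Iic.2 (m.sub_le i)) (mem_Iic.2 (m.sub_le j)) h
    simp only [mem_Iic] at hi hj
    omega
  · have h := hx.adj (m - (i + 1)) (by omega)
    rw [show m - (i + 1) + 1 = m - i by omega] at h
    have hpar : Even (m - (i + 1)) ↔ ¬Even i := by simp only [Nat.even_iff] at hm ⊢; omega
    by_cases hi : Even i <;> simpa [hi, hpar] using h.symm

theorem reverse_of_odd (hx : IsAltPath P Q x m) (hm : Odd m) :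
    IsAltPath P Q (fun i => x (m - i)) m := by
  refine ⟨fun i hi j hj h => ?_, fun i hi => ?_⟩
  · have := hx.injOn (mem_Iic.2 (m.sub_le i)) (mem_Iic.2 (m.sub_le j)) h
    simp only [mem_Iic] at hi hj
    omega
  · have h := hx.adj (m - (i + 1)) (by omega)
    rw [show m - (i + 1) + 1 = m - i by omega] at h
    have hpar : Even (m - (i + 1)) ↔ Even i := by
      simp only [Nat.even_iff, Nat.odd_iff] at hm ⊢; omega
    by_cases hi : Even i <;> simpa [hi, hpar] using h.symm

theorem cons (hx : IsAltPath P Q x m) {u : V} (hu : G.Adj u (x 0)) (hux : ∀ j ≤ m, x j ≠ u) :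
    IsAltPath ⊤ P (fun i => if i = 0 then u else x (i - 1)) (m + 1) := by
  refine ⟨fun i hi j hj h => ?_, fun i hi => ?_⟩
  · simp only [mem_Iic] at hi hj
    rcases i with _ | i <;> rcases j with _ | j <;> simp only [reduceCtorEq, if_true, if_false,
      Nat.add_sub_cancel] at h
    · rfl
    · exact absurd h.symm (hux j (by omega))
    · exact absurd h (hux i (by omega))
    · rw [hx.injOn (mem_Iic.2 (by omega)) (mem_Iic.2 (by omega)) h]
  · rcases i with _ | i
    · simpa using hu
    · have h := hx.adj i (by omega)
      by_cases hi : Even i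
      · simpa [hi, Nat.even_add_one] using h
      · simpa [hi, Nat.even_add_one] using (show Q.Adj _ _ by simpa [hi] using h).adj_sub

theorem last_mem_verts (hx : IsAltPath P Q x m) (hm : 0 < m) :
    x m ∈ (if Even m then Q else P).verts := by
  have h := hx.adj (m - 1) (by omega)
  rw [show m - 1 + 1 = m by omega] at h
  have hpar : Even (m - 1) ↔ ¬Even m := by rw [Nat.even_iff, Nat.even_iff]; omega
  by_cases hm' : Even m
  · rw [if_neg fun h' => hpar.1 h' hm'] at h
    rw [if_pos hm']
    exact Q.edge_vert h.symm
  · rw [if_pos (hpar.2 hm')] at h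
    rw [if_neg hm']
    exact P.edge_vert h.symm

theorem mem_verts_left_of_odd (hx : IsAltPath P Q x m) (hm : Odd m) {j : ℕ} (hj : j ≤ m) :
    x j ∈ P.verts := by
  by_cases hj' : Even j
  · have h := hx.adj j (lt_of_le_of_ne hj (by rintro rfl; exact Nat.not_even_iff_odd.2 hm hj'))
    rw [if_pos hj'] at h
    exact P.edge_vert h
  · have h := (hx.take hj).last_mem_verts (Nat.pos_of_ne_zero (by rintro rfl; exact hj' .zero))
    rwa [if_neg hj'] at h

theorem extend (hx : IsAltPath P Q x m) {y : V} (hy : (if Even m then P else Q).Adj (x m) y)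
    (hfresh : ∀ j ≤ m, x j ≠ y) : IsAltPath P Q (Function.update x (m + 1) y) (m + 1) := by
  have hlow : ∀ j ≤ m, Function.update x (m + 1) y j = x j := fun j hj =>
    Function.update_of_ne (by omega) _ _
  refine ⟨fun i hi j hj h => ?_, fun i hi => ?_⟩
  · simp only [mem_Iic] at hi hj
    rcases hi.lt_or_eq with hi | rfl <;> rcases hj.lt_or_eq with hj | rfl
    · rw [hlow i (by omega), hlow j (by omega)] at h
      exact hx.injOn (mem_Iic.2 (by omega)) (mem_Iic.2 (by omega)) h
    · rw [hlow i (by omega), Function.update_self] at h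
      exact absurd h (hfresh i (by omega))
    · rw [hlow j (by omega), Function.update_self] at h
      exact absurd h.symm (hfresh j (by omega))
    · rfl
  · rcases (Nat.lt_succ_iff.1 hi).lt_or_eq with hi | rfl
    · rw [hlow i (by omega), hlow (i + 1) (by omega)]
      exact hx.adj i hi
    · rwa [hlow i le_rfl, Function.update_self]

theorem partner_ne (hP : P.IsMatching) (hQ : Q.IsMatching) (hx : IsAltPath P Q x m)
    (hx0 : x 0 ∉ Q.verts) {y : V} (hy : (if Even m then P else Q).Adj (x m) y) {j : ℕ}
    (hj : j ≤ m) : x j ≠ y := by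
  rintro rfl
  have hR : (if Even m then P else Q).IsMatching := by split_ifs <;> assumption
  rcases hj.lt_or_eq with hjm | rfl
  swap
  · exact hy.ne rfl
  by_cases hpar : Even j ↔ Even m
  · have h := hx.adj j hjm
    rw [show (if Even j then P else Q) = if Even m then P else Q by simp only [hpar]] at h
    have := hx.injOn (mem_Iic.2 (by omega)) (mem_Iic.2 le_rfl) (hR.eq_of_adj_left h hy.symm)
    subst this
    rw [Nat.even_add_one] at hpar
    tauto
  · rcases j with _ | j
    · have hm : ¬Even m := fun hm => hpar (iff_of_true Even.zero hm)
      rw [if_neg hm] at hy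
      exact hx0 (Q.edge_vert hy.symm)
    · have h := hx.adj j (by omega)
      have hpar' : Even j ↔ Even m := by rw [Nat.even_add_one] at hpar; tauto
      rw [show (if Even j then P else Q) = if Even m then P else Q by simp only [hpar']] at h
      have := hx.injOn (mem_Iic.2 (by omega)) (mem_Iic.2 le_rfl) (hR.eq_of_adj_right h hy)
      omega

theorem succ_le_card [Finite V] (hx : IsAltPath P Q x m) : m + 1 ≤ Nat.card V := by
  have := Set.ncard_le_ncard_of_injOn x (fun _ _ => mem_univ _) hx.injOn (toFinite univ)
  rwa [← Finset.coe_Iic, ncard_coe_finset, Nat.card_Iic, ncard_univ] at this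

theorem mem_insert_verts_of_even (hx : IsAltPath P Q x m) (hm : Even m) :
    x m ∈ insert (x 0) Q.verts := by
  rcases Nat.eq_zero_or_pos m with rfl | hm0
  · exact mem_insert _ _
  · exact .inr (by simpa [hm] using hx.last_mem_verts hm0)

theorem exists_rotate (hN : N.IsMatching) (hx : IsAltPath ⊤ N x (m + 2)) (h0 : x 0 ∉ N.verts) :
    ∃ N₁ : G.Subgraph, N₁.IsMatching ∧ N₁.verts = insert (x 0) N.verts \ {x 2} ∧
      IsAltPath ⊤ N₁ (fun i => x (i + 2)) m := by
  have h01 : G.Adj (x 0) (x 1) := by simpa using hx.adj 0 (by omega)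
  have h12 : N.Adj (x 1) (x 2) := by simpa using hx.adj 1 (by omega)
  have hfar : ∀ i, 3 ≤ i → i ≤ m + 2 → x i ∉ ({x 1, x 2} : Set V) := by
    rintro i hi3 hi (h | h)
    exacts [hx.ne hi (by omega) (by omega) h, hx.ne hi (by omega) (by omega) h]
  refine ⟨N.deleteVerts {x 1, x 2} ⊔ G.subgraphOfAdj h01,
    (hN.deleteVerts_pair h12).sup_subgraphOfAdj h01 (fun h => h0 h.1) (fun h => h.2 (.inl rfl)),
    ?_, fun i hi j hj h => ?_, fun i hi => ?_⟩
  · have h02 := hx.ne (i := 0) (j := 2) (by omega) (by omega) (by omega)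
    have h12' := hx.ne (i := 1) (j := 2) (by omega) (by omega) (by omega)
    have h1 := N.edge_vert h12
    ext v
    simp only [Subgraph.verts_sup, Subgraph.deleteVerts_verts, subgraphOfAdj_verts,
      mem_insert_iff, mem_union, mem_sdiff, mem_singleton_iff]
    constructor
    · rintro (⟨hv, hv'⟩ | rfl | rfl) <;> tauto
    · rintro ⟨rfl | hv, hv2⟩
      · tauto
      · by_cases hv1 : v = x 1 <;> tauto
  · have := hx.injOn (mem_Iic.2 (by simp only [mem_Iic] at hi; omega))
      (mem_Iic.2 (by simp only [mem_Iic] at hj; omega)) h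
    omega
  · have h := hx.adj (i + 2) (by omega)
    by_cases hi' : Even i
    · simpa [hi', Nat.even_add_one] using h
    · have h' : N.Adj (x (i + 2)) (x (i + 2 + 1)) := by simpa [hi', Nat.even_add_one] using h
      have : i ≠ 0 := by rintro rfl; exact hi' .zero
      rw [if_neg hi']
      exact .inl (Subgraph.deleteVerts_adj.2 ⟨N.edge_vert h', hfar _ (by omega) (by omega),
        N.edge_vert h'.symm, hfar _ (by omega) (by omega), h'⟩)

theorem exists_switch (hN : N.IsMatching) (hx : IsAltPath ⊤ N x m) (hm : Even m)
    (h0 : x 0 ∉ N.verts) :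
    ∃ N' : G.Subgraph, N'.IsMatching ∧ N'.verts = insert (x 0) N.verts \ {x m} := by
  obtain ⟨k, rfl⟩ := hm
  induction k generalizing N x with
  | zero => exact ⟨N, hN, by simp [insert_sdiff_self_of_notMem h0]⟩
  | succ k ih =>
    rw [show k + 1 + (k + 1) = k + k + 2 by omega] at hx ⊢
    obtain ⟨N₁, hN₁, hV₁, hx₁⟩ := hx.exists_rotate hN h0
    obtain ⟨N', hN', hV'⟩ := ih hN₁ (by simp [hV₁]) hx₁
    have h12 : N.Adj (x 1) (x 2) := by simpa using hx.adj 1 (by omega)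
    have h2 : x 2 ∈ insert (x 0) N.verts := .inr (N.edge_vert h12.symm)
    exact ⟨N', hN', by rw [hV', hV₁, insert_sdiff_singleton, insert_eq_of_mem h2]⟩

end IsAltPath

theorem exists_maximal_isAltPath [Finite V] {P Q : G.Subgraph} (hP : P.IsMatching)
    (hQ : Q.IsMatching) {u : V} (huQ : u ∉ Q.verts) :
    ∃ m x, x 0 = u ∧ IsAltPath P Q x m ∧ x m ∉ (if Even m then P else Q).verts := by
  classical
  let HasPath : ℕ → Prop := fun m => ∃ x, x 0 = u ∧ IsAltPath P Q x m
  have hpath0 : HasPath 0 := ⟨fun _ => u, rfl,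
    fun i hi j hj _ => (Nat.le_zero.1 hi).trans (Nat.le_zero.1 hj).symm, fun i hi => by omega⟩
  have hbound : ∀ m, HasPath m → m ≤ Nat.card V := fun m ⟨x, _, hx⟩ => by
    have := hx.succ_le_card; omega
  set m := Nat.findGreatest HasPath (Nat.card V)
  obtain ⟨x, hx0, hx⟩ : HasPath m := Nat.findGreatest_spec (Nat.zero_le _) hpath0
  refine ⟨m, x, hx0, hx, fun hxm => ?_⟩
  obtain ⟨y, hy, -⟩ := (show (if Even m then P else Q).IsMatching by split_ifs <;> assumption) hxm
  have hlong : HasPath (m + 1) := ⟨_, by rw [Function.update_of_ne (by omega)]; exact hx0,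
    hx.extend hy fun j hj => hx.partner_ne hP hQ (hx0 ▸ huQ) hy hj⟩
  have := Nat.le_findGreatest (hbound _ hlong) hlong
  omega

/-- A matching of `G - S`, seen as a matching of `G` covering no vertex of `S`. -/
def IsAvoidingMatching (S : Set V) (M : G.Subgraph) : Prop :=
  M.IsMatching ∧ Disjoint S M.verts

/-- Maximality counts covered vertices, i.e. twice the number of edges
(`Subgraph.IsMatching.ncard_verts`). -/
def IsMaxAvoidingMatching (S : Set V) (M : G.Subgraph) : Prop :=
  IsAvoidingMatching S M ∧
    ∀ M' : G.Subgraph, IsAvoidingMatching S M' → M'.verts.ncard ≤ M.verts.ncard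

/-- `D(G - S)`. -/
def avoidingDset (G : SimpleGraph V) (S : Set V) : Set V :=
  {v | v ∉ S ∧ ∃ M : G.Subgraph, IsMaxAvoidingMatching S M ∧ v ∉ M.verts}

variable {S : Set V} {M N : G.Subgraph} {a b p t v w : V}

theorem isMaximumMatching_iff_isMaxAvoidingMatching_empty [Finite V] :
    IsMaximumMatching G M ↔ IsMaxAvoidingMatching ∅ M := by
  constructor
  · rintro ⟨hM, hmax⟩
    refine ⟨⟨hM, empty_disjoint _⟩, fun M' hM' => ?_⟩
    have := hmax M' hM'.1
    rw [hM.ncard_verts, hM'.1.ncard_verts]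
    omega
  · rintro ⟨⟨hM, -⟩, hmax⟩
    refine ⟨hM, fun M' hM' => ?_⟩
    have := hmax M' ⟨hM', empty_disjoint _⟩
    rw [hM.ncard_verts, hM'.ncard_verts] at this
    omega

theorem Dset_eq_avoidingDset_empty [Finite V] : Dset G = avoidingDset G ∅ := by
  ext v
  simp [Dset, avoidingDset, isMaximumMatching_iff_isMaxAvoidingMatching_empty]

namespace IsMaxAvoidingMatching

theorem of_ncard_le (hM : IsMaxAvoidingMatching S M) (hN : IsAvoidingMatching S N)
    (h : M.verts.ncard ≤ N.verts.ncard) : IsMaxAvoidingMatching S N :=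
  ⟨hN, fun M' hM' => (hM.2 M' hM').trans h⟩

theorem mem_verts_of_adj [Finite V] (hN : IsMaxAvoidingMatching S N) (hpt : G.Adj p t)
    (hpS : p ∉ S) (htS : t ∉ S) (hp : p ∉ N.verts) : t ∈ N.verts := by
  by_contra ht
  have hV : (N ⊔ G.subgraphOfAdj hpt).verts = insert p (insert t N.verts) := by
    ext; simp
  have := hN.2 _ ⟨hN.1.1.sup_subgraphOfAdj hpt hp ht, by
    rw [hV, disjoint_insert_right, disjoint_insert_right]; exact ⟨hpS, htS, hN.1.2⟩⟩
  rw [hV, ncard_insert_of_notMem (by rintro (h | h); exacts [hpt.ne h, hp h]),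
    ncard_insert_of_notMem ht] at this
  omega

theorem exists_switch [Finite V] (hN : IsMaxAvoidingMatching S N) {x : ℕ → V} {m : ℕ}
    (hx : IsAltPath ⊤ N x m) (hm : Even m) (h0 : x 0 ∉ N.verts) (h0S : x 0 ∉ S) :
    ∃ N' : G.Subgraph, IsMaxAvoidingMatching S N' ∧ N'.verts = insert (x 0) N.verts \ {x m} := by
  obtain ⟨N', hN', hV'⟩ := hx.exists_switch hN.1.1 hm h0
  refine ⟨N', hN.of_ncard_le ⟨hN', ?_⟩ ?_, hV'⟩
  · rw [hV']
    exact (disjoint_insert_right.2 ⟨h0S, hN.1.2⟩).mono_right sdiff_subset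
  · rw [hV', ncard_sdiff_singleton_of_mem (hx.mem_insert_verts_of_even hm),
      ncard_insert_of_notMem h0]
    simp

theorem false_of_augmenting [Finite V] (hN : IsMaxAvoidingMatching S N) {x : ℕ → V} {m : ℕ}
    (hx : IsAltPath ⊤ N x m) (hm : Odd m) (h0 : x 0 ∉ N.verts) (hm' : x m ∉ N.verts)
    (h0S : x 0 ∉ S) (hmS : x m ∉ S) : False := by
  obtain ⟨k, rfl⟩ := hm
  have hx' := hx.take (n := 2 * k) (by omega)
  obtain ⟨N₁, hN₁, hV₁⟩ := hN.exists_switch hx' (even_two_mul k) h0 h0S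
  have hlast : G.Adj (x (2 * k)) (x (2 * k + 1)) := by simpa using hx.adj (2 * k) (by omega)
  have h2kS : x (2 * k) ∉ S := by
    rcases hx'.mem_insert_verts_of_even (even_two_mul k) with h | h
    exacts [h ▸ h0S, fun hS => hN.1.2.notMem_of_mem_left hS h]
  have := hN₁.mem_verts_of_adj hlast h2kS hmS (by simp [hV₁])
  rw [hV₁] at this
  rcases this.1 with h | h
  exacts [hx.ne (by omega) (by omega) (by omega) h, hm' h]

theorem deleteVerts_pair [Finite V] (hM : IsMaxAvoidingMatching S M) (haS : a ∉ S)
    (ha : a ∉ avoidingDset G S) (hab : M.Adj a b) :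
    IsMaxAvoidingMatching (insert a S) (M.deleteVerts {a, b}) := by
  refine ⟨⟨hM.1.1.deleteVerts_pair hab, disjoint_insert_left.2
    ⟨fun h => h.2 (.inl rfl), hM.1.2.mono_right sdiff_subset⟩⟩, fun N hN => ?_⟩
  have hNS : IsAvoidingMatching S N := ⟨hN.1, hN.2.mono_left (subset_insert _ _)⟩
  have hle := hM.2 N hNS
  have hne : N.verts.ncard ≠ M.verts.ncard := fun h =>
    ha ⟨haS, N, hM.of_ncard_le hNS h.ge, hN.2.notMem_of_mem_left (mem_insert _ _)⟩
  have hab' : {a, b} ⊆ M.verts := by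
    rintro _ (rfl | rfl)
    exacts [M.edge_vert hab, M.edge_vert hab.symm]
  rw [Subgraph.deleteVerts_verts, ncard_sdiff hab', ncard_pair hab.ne]
  rw [hN.1.ncard_verts, hM.1.1.ncard_verts] at hle hne ⊢
  omega

theorem exists_move_hole [Finite V] (hN : IsMaxAvoidingMatching S N) (hp : p ∉ N.verts)
    (hpS : p ∉ S) (ht : t ∈ avoidingDset G S) (hpt : G.Adj p t) :
    ∃ N' : G.Subgraph, IsMaxAvoidingMatching S N' ∧ N'.verts = insert p N.verts \ {t} := by
  obtain ⟨htS, Nt, hNt, htNt⟩ := ht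
  obtain ⟨m, x, rfl, hx, hend⟩ := exists_maximal_isAltPath hNt.1.1 hN.1.1 hp
  rcases Nat.even_or_odd m with hm | hm
  · rw [if_pos hm] at hend
    have hm0 : 0 < m := Nat.pos_of_ne_zero <| by
      rintro rfl; exact hend (hNt.mem_verts_of_adj hpt.symm htS hpS htNt)
    have hxm : x m ∈ N.verts := by simpa [hm] using hx.last_mem_verts hm0
    by_cases hxt : x m = t
    · rw [← hxt]
      exact hN.exists_switch (hx.mono le_top le_rfl) hm hp hpS
    · -- switching `Nt` along the reversed path misses both `p` and its neighbour `t`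
      obtain ⟨N₃, hN₃, hV₃⟩ := hNt.exists_switch ((hx.reverse_of_even hm).mono le_top le_rfl) hm
        (by simpa using hend) (fun h => hN.1.2.notMem_of_mem_left h hxm)
      simp only [Nat.sub_zero, Nat.sub_self] at hV₃
      have := hN₃.mem_verts_of_adj hpt hpS htS (by simp [hV₃])
      rw [hV₃] at this
      rcases this.1 with h | h
      exacts [absurd h.symm hxt, absurd h htNt]
  · rw [if_neg (Nat.not_even_iff_odd.2 hm)] at hend
    exact (hN.false_of_augmenting (hx.mono le_top le_rfl) hm hp hend hpS
      (fun h => hNt.1.2.notMem_of_mem_left h (hx.mem_verts_left_of_odd hm le_rfl))).elim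

theorem mem_verts_of_reachable [Finite V] (hN : IsMaxAvoidingMatching S N)
    {p q : avoidingDset G S} (hpq : (G.induce (avoidingDset G S)).Reachable p q) (hne : p ≠ q)
    (hp : (p : V) ∉ N.verts) : (q : V) ∈ N.verts := by
  obtain ⟨W⟩ := hpq
  induction W generalizing N with
  | nil => exact absurd rfl hne
  | @cons p t q hpt W ih =>
    by_cases htq : t = q
    · subst htq
      exact hN.mem_verts_of_adj hpt p.2.1 t.2.1 hp
    obtain ⟨N', hN', hV'⟩ := hN.exists_move_hole hp p.2.1 t.2 hpt
    have := ih hN' htq (by simp [hV'])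
    rw [hV'] at this
    exact this.1.resolve_left fun h => hne (Subtype.ext h.symm)

end IsMaxAvoidingMatching

theorem mem_avoidingDset_of_mem_avoidingDset_insert [Finite V] (hw : w ∈ avoidingDset G S)
    (haw : G.Adj a w) (hv : v ∈ avoidingDset G (insert a S)) : v ∈ avoidingDset G S := by
  obtain ⟨hwS, Mw, hMw, hwMw⟩ := hw
  obtain ⟨hvaS, M', hM', hvM'⟩ := hv
  refine ⟨fun h => hvaS (.inr h), ?_⟩
  by_cases hvMw : v ∉ Mw.verts
  · exact ⟨Mw, hMw, hvMw⟩
  obtain ⟨m, x, rfl, hx, hend⟩ := exists_maximal_isAltPath hMw.1.1 hM'.1.1 hvM'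
  rcases Nat.even_or_odd m with hm | hm
  · rw [if_pos hm] at hend
    have hm0 : 0 < m := Nat.pos_of_ne_zero <| by rintro rfl; exact hvMw hend
    have hxm : x m ∈ M'.verts := by simpa [hm] using hx.last_mem_verts hm0
    obtain ⟨N, hN, hV⟩ := hMw.exists_switch ((hx.reverse_of_even hm).mono le_top le_rfl) hm
      (by simpa using hend) (fun h => hM'.1.2.notMem_of_mem_left (.inr h) hxm)
    exact ⟨N, hN, by simp [hV]⟩
  · rw [if_neg (Nat.not_even_iff_odd.2 hm)] at hend
    by_cases hxa : x m = a
    · -- prepend the edge `w a` to the reversed path and switch `Mw` along it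
      have hy := (hx.reverse_of_odd hm).cons (u := w) (by simpa [hxa] using haw.symm)
        fun j hj h => hwMw (h ▸ hx.mem_verts_left_of_odd hm (by omega))
      obtain ⟨N, hN, hV⟩ := hMw.exists_switch hy (by simpa [Nat.even_add_one] using hm)
        (by simpa using hwMw) (by simpa using hwS)
      exact ⟨N, hN, by simp [hV]⟩
    · exact (hM'.false_of_augmenting (hx.mono le_top le_rfl) hm hvM' hend hvaS (by
        rintro (h | h)
        exacts [hxa h, hMw.1.2.notMem_of_mem_left h (hx.mem_verts_left_of_odd hm le_rfl)])).elim

theorem mem_avoidingDset_insert_iff [Finite V] (haS : a ∉ S) (ha : a ∉ avoidingDset G S)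
    (hw : w ∈ avoidingDset G S) (haw : G.Adj a w) (hv : v ∉ insert a S) :
    v ∈ avoidingDset G (insert a S) ↔ v ∈ avoidingDset G S := by
  refine ⟨mem_avoidingDset_of_mem_avoidingDset_insert hw haw, fun ⟨_, N, hN, hvN⟩ => ?_⟩
  have haN : a ∈ N.verts := by_contra fun h => ha ⟨haS, N, hN, h⟩
  obtain ⟨b, hab, -⟩ := hN.1.1 haN
  exact ⟨hv, _, hN.deleteVerts_pair haS ha hab, fun h => hvN h.1⟩

theorem mem_avoidingDset_iff_of_subset_Aset [Finite V] (hS : S ⊆ Aset G) (hv : v ∉ S) :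
    v ∈ avoidingDset G S ↔ v ∈ Dset G := by
  induction S, S.toFinite using Set.Finite.induction_on generalizing v with
  | empty => rw [Dset_eq_avoidingDset_empty]
  | @insert a S haS _ ih =>
    have hSA := (subset_insert a S).trans hS
    obtain ⟨haD, w, hwD, haw⟩ := hS (mem_insert a S)
    rw [mem_avoidingDset_insert_iff haS (mt (ih hSA haS).1 haD)
      ((ih hSA fun h => (hSA h).1 hwD).2 hwD) haw hv]
    exact ih hSA fun h => hv (.inr h)

theorem _root_.IsMaximumMatching.exists_adj_mem_Dset [Finite V] (hM : IsMaximumMatching G M)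
    (ha : a ∈ Aset G) : ∃ d ∈ Dset G, M.Adj a d := by
  obtain ⟨haD, w, hwD, haw⟩ := ha
  rw [Dset_eq_avoidingDset_empty] at haD hwD ⊢
  rw [isMaximumMatching_iff_isMaxAvoidingMatching_empty] at hM
  obtain ⟨b, hab, -⟩ := hM.1.1 (by_contra fun h => haD ⟨notMem_empty a, M, hM, h⟩)
  refine ⟨b, mem_avoidingDset_of_mem_avoidingDset_insert hwD haw ⟨?_,
    _, hM.deleteVerts_pair (notMem_empty a) haD hab, fun h => h.2 (.inr rfl)⟩, hab⟩
  rintro (h | h)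
  exacts [hab.ne h.symm, h]

theorem _root_.IsMaximumMatching.isMaxAvoidingMatching_deleteVerts [Finite V]
    (hM : IsMaximumMatching G M) (hS : S ⊆ Aset G) :
    IsMaxAvoidingMatching S (M.deleteVerts (S ∪ {b | ∃ s ∈ S, M.Adj s b})) := by
  induction S, S.toFinite using Set.Finite.induction_on with
  | empty =>
    simpa [Subgraph.deleteVerts_empty] using
      isMaximumMatching_iff_isMaxAvoidingMatching_empty.1 hM
  | @insert a S haS _ ih =>
    have hSA := (subset_insert a S).trans hS
    have haA := hS (mem_insert a S)
    obtain ⟨d, hd, had⟩ := hM.exists_adj_mem_Dset haA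
    have hpartner : ∀ s ∈ S, ∀ c, M.Adj s c → c ∈ Dset G := fun s hs c hsc => by
      obtain ⟨d', hd', hsd'⟩ := hM.exists_adj_mem_Dset (hSA hs)
      rwa [hM.1.eq_of_adj_left hsc hsd']
    have hadj : (M.deleteVerts (S ∪ {b | ∃ s ∈ S, M.Adj s b})).Adj a d := by
      refine Subgraph.deleteVerts_adj.2 ⟨M.edge_vert had, ?_, M.edge_vert had.symm, ?_, had⟩
      · rintro (h | ⟨s, hs, hsa⟩)
        exacts [haS h, haA.1 (hpartner s hs a hsa)]
      · rintro (h | ⟨s, hs, hsd⟩)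
        exacts [(hSA h).1 hd, haS (hM.1.eq_of_adj_right hsd had ▸ hs)]
    have ha : a ∉ avoidingDset G S := fun h =>
      haA.1 ((mem_avoidingDset_iff_of_subset_Aset hSA haS).1 h)
    convert (ih hSA).deleteVerts_pair haS ha hadj using 1
    rw [Subgraph.deleteVerts_deleteVerts]
    congr 1
    have hpart : ∀ v, M.Adj a v ↔ v = d := fun v => ⟨fun h => hM.1.eq_of_adj_left h had, by
      rintro rfl; exact had⟩
    ext v
    simp only [mem_union, mem_insert_iff, mem_ofPred_eq, exists_eq_or_imp, hpart,
      mem_singleton_iff, or_assoc, or_comm, or_left_comm]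

end SimpleGraph

open SimpleGraph

/-- For every finite graph `G` and every maximum matching `M` of `G`: every
vertex of `A(G)` is matched by `M` to a vertex of `D(G)`, and distinct vertices
of `A(G)` are matched by `M` to vertices lying in distinct connected components
of the subgraph induced on `D(G)`. -/
theorem gallaiEdmonds_A_matched_to_distinct_components {V : Type*} [Fintype V]
    (G : SimpleGraph V) (M : G.Subgraph) (hM : IsMaximumMatching G M) :
    (∀ a ∈ Aset G, ∃ d ∈ Dset G, M.Adj a d) ∧
    (∀ a ∈ Aset G, ∀ a' ∈ Aset G, a ≠ a' →
      ∀ (d d' : Dset G), M.Adj a ↑d → M.Adj a' ↑d' →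
        (G.induce (Dset G)).connectedComponentMk d ≠
          (G.induce (Dset G)).connectedComponentMk d') := by
  refine ⟨fun a ha => hM.exists_adj_mem_Dset ha, fun a ha a' ha' haa' d d' had had' hdd' => ?_⟩
  have hD : Dset G ⊆ avoidingDset G (Aset G) := fun v hv =>
    (mem_avoidingDset_iff_of_subset_Aset subset_rfl fun h => h.1 hv).2 hv
  have hreach := (ConnectedComponent.exact hdd').map (G.induceHomOfLE hD).toHom
  have hne : inclusion hD d ≠ inclusion hD d' := fun h =>
    haa' (hM.1.eq_of_adj_right had (congrArg Subtype.val h ▸ had'))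
  have hMA := hM.isMaxAvoidingMatching_deleteVerts (subset_refl (Aset G))
  exact (hMA.mem_verts_of_reachable hreach hne fun h => h.2 (.inr ⟨a, ha, had⟩)).2
    (.inr ⟨a', ha', had'⟩)
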